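/- For every finite simple undirected graph G = (V,E) with V nonempty and every integer k ≥ 1, the minmax value for Player 1 in the clique game Γ(G,k) is at least 1/k. -/

import Mathlib

/-!
Player 1 names the label that Player 2 is most likely to pick (by pigeonhole it has probability
at least `1/k`) and points at Player 2; he then wins whenever Player 2 picks that label,
whatever Player 3 does.
-/

/-- A mixed strategy on a finite strategy set `S`. -/
def IsMixedStrategy {S : Type*} [Fintype S] (σ : S → ℝ) : Prop :=
  (∀ s, 0 ≤ σ s) ∧ ∑ s, σ s = 1

/-- The minmax (threat) value for Player 1 of the three-player game with payoff `u`: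
the minimum over mixed strategy profiles of Players 2 and 3 of the best-response
payoff of Player 1 (the minimum is attained, so `sInf` is a minimum). -/
noncomputable def minmaxVal {S₁ S₂ S₃ : Type*} [Fintype S₁] [Fintype S₂] [Fintype S₃]
    (u : S₁ × S₂ × S₃ → ℝ) : ℝ :=
  sInf { v | ∃ σ₂ : S₂ → ℝ, ∃ σ₃ : S₃ → ℝ,
    IsMixedStrategy σ₂ ∧ IsMixedStrategy σ₃ ∧
    v = ⨆ a : S₁, ∑ j : S₂, ∑ k : S₃, σ₂ j * σ₃ k * u (a, j, k) }

/-- The clique game `Γ(G,k)`: Player 1 picks a label in `Fin k` and points at one of the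
two bullies (`Fin 2`); each bully picks a label in `Fin k` and a vertex of `G`.
Player 1 gets payoff 1 iff his label matches the label of the bully he points at, or the
bullies choose the same label with different vertices, or different labels with the same
vertex, or distinct non-adjacent vertices; otherwise payoff 0. -/
def cliqueGame {V : Type*} [DecidableEq V] (G : SimpleGraph V) [DecidableRel G.Adj]
    (k : ℕ) : (Fin k × Fin 2) × (Fin k × V) × (Fin k × V) → ℝ :=
  fun p =>
    if p.1.1 = (if p.1.2 = 0 then p.2.1.1 else p.2.2.1) ∨
       (p.2.1.1 = p.2.2.1 ∧ p.2.1.2 ≠ p.2.2.2) ∨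
       (p.2.1.1 ≠ p.2.2.1 ∧ p.2.1.2 = p.2.2.2) ∨
       (p.2.1.2 ≠ p.2.2.2 ∧ ¬ G.Adj p.2.1.2 p.2.2.2)
    then 1 else 0

open Finset

section MixedStrategy

variable {S : Type*} [Fintype S]

theorem IsMixedStrategy.uniform [Nonempty S] :
    IsMixedStrategy fun _ : S => (Fintype.card S : ℝ)⁻¹ := by
  refine ⟨fun _ => by positivity, ?_⟩
  rw [sum_const, card_univ, nsmul_eq_mul, mul_inv_cancel₀ (by positivity)]

theorem IsMixedStrategy.exists_inv_card_le_sum_fiber {L : Type*} [Fintype L] [DecidableEq L]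
    [Nonempty L] {σ : S → ℝ} (hσ : IsMixedStrategy σ) (f : S → L) :
    ∃ y, (Fintype.card L : ℝ)⁻¹ ≤ ∑ s with f s = y, σ s :=
  Fintype.exists_le_sum_fiber_of_nsmul_le_sum f <| by
    rw [hσ.2, nsmul_eq_mul, mul_inv_cancel₀ (by positivity)]

end MixedStrategy

section ExpectedPayoff

variable {S₁ S₂ S₃ : Type*} [Fintype S₂] [Fintype S₃]

def expectedPayoff (u : S₁ × S₂ × S₃ → ℝ) (σ₂ : S₂ → ℝ) (σ₃ : S₃ → ℝ) (a : S₁) : ℝ :=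
  ∑ j, ∑ k, σ₂ j * σ₃ k * u (a, j, k)

theorem le_minmaxVal [Fintype S₁] [Nonempty S₂] [Nonempty S₃] {u : S₁ × S₂ × S₃ → ℝ} {c : ℝ}
    (h : ∀ σ₂ σ₃, IsMixedStrategy σ₂ → IsMixedStrategy σ₃ →
      ∃ a, c ≤ expectedPayoff u σ₂ σ₃ a) :
    c ≤ minmaxVal u := by
  refine le_csInf ⟨_, _, _, .uniform, .uniform, rfl⟩ ?_
  rintro _ ⟨σ₂, σ₃, hσ₂, hσ₃, rfl⟩
  obtain ⟨a, ha⟩ := h σ₂ σ₃ hσ₂ hσ₃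
  exact ha.trans <| le_ciSup (Set.finite_range _).bddAbove a

theorem sum_le_expectedPayoff {u : S₁ × S₂ × S₃ → ℝ} (hu : 0 ≤ u) {σ₂ : S₂ → ℝ}
    {σ₃ : S₃ → ℝ} (hσ₂ : ∀ j, 0 ≤ σ₂ j) (hσ₃ : IsMixedStrategy σ₃) {a : S₁} (p : S₂ → Prop)
    [DecidablePred p] (hp : ∀ j k, p j → u (a, j, k) = 1) :
    ∑ j with p j, σ₂ j ≤ expectedPayoff u σ₂ σ₃ a := by
  have hrow : ∀ j, p j → σ₂ j = ∑ k, σ₂ j * σ₃ k * u (a, j, k) := fun j hj => by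
    simp only [hp j _ hj, mul_one, ← mul_sum, hσ₃.2]
  rw [sum_congr rfl fun j hj => hrow j (mem_filter.1 hj).2]
  exact sum_le_sum_of_subset_of_nonneg (filter_subset _ _) fun j _ _ =>
    sum_nonneg fun k _ => mul_nonneg (mul_nonneg (hσ₂ j) (hσ₃.1 k)) (hu _)

end ExpectedPayoff

section CliqueGame

variable {V : Type*} [DecidableEq V] (G : SimpleGraph V) [DecidableRel G.Adj] (k : ℕ)

theorem cliqueGame_nonneg : 0 ≤ cliqueGame G k := fun _ => by
  unfold cliqueGame; split_ifs <;> norm_num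

theorem cliqueGame_point_at_first_eq_one (j k' : Fin k × V) :
    cliqueGame G k ((j.1, 0), j, k') = 1 :=
  if_pos (Or.inl (if_pos rfl).symm)

end CliqueGame

/-- The minmax value for Player 1 in the clique game `Γ(G,k)` is always at least `1/k`. -/
theorem cliqueGame_minmax_ge (V : Type*) [Fintype V] [DecidableEq V] [Nonempty V]
    (G : SimpleGraph V) [DecidableRel G.Adj] (k : ℕ) (hk : 1 ≤ k) :
    1 / (k : ℝ) ≤ minmaxVal (cliqueGame G k) := by
  have : NeZero k := ⟨Nat.one_le_iff_ne_zero.mp hk⟩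
  refine le_minmaxVal fun σ₂ σ₃ hσ₂ hσ₃ => ?_
  obtain ⟨x, hx⟩ := hσ₂.exists_inv_card_le_sum_fiber Prod.fst
  refine ⟨(x, 0), ?_⟩
  rw [Fintype.card_fin, ← one_div] at hx
  refine hx.trans <| sum_le_expectedPayoff (cliqueGame_nonneg G k) hσ₂.1 hσ₃ _ ?_
  rintro j k' rfl
  exact cliqueGame_point_at_first_eq_one G k j k'
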